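/- Let f, g : Ω → ℝ satisfy |Hf[0,1] − Hg[0,1]| ≤ 2^{−N−1} and |Hf[k,j] − Hg[k,j]| ≤ 2^{−N+(k−1)/2} for all (k,j) ∈ Ω̂ with k ≥ 1. Then sup_{t∈Ω} |f(t) − g(t)| ≤ 2^{−N−1} + Σ_{k=1}^{N} 2^{−N+k−1} = 1 − 2^{−N−1}. -/

import Mathlib

/-!
Write `d = f - g` and let `S(k, q)` be the sum of `d` over the `q`-th of the `2^k` dyadic blocks
of `{1, …, 2^N}`. The coefficient bounds say, after clearing the normalisations `2^{-N}` and
`2^{(k-1)/2}`, that `|S(0, 0)| ≤ 1/2` and that the two halves of every block differ by at most `1`.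
Since each half equals (block sum ± difference) / 2, induction on the level gives
`|S(k, q)| ≤ 1 - 2^{-(k+1)}`; at level `N` the blocks are single points.
-/

open Finset Real

noncomputable section

/-- The time points `t[n] = -1/2 + (2n-1)/2^(N+1)` for `n = 1, …, 2^N`. -/
def tpt (N n : ℕ) : ℝ := -(1/2) + (2*(n:ℝ) - 1) / 2^(N+1)

/-- The Haar index points `P[k,j] = -1/2 + (2j-1)/2^k`. -/
def Ppt (k j : ℕ) : ℝ := -(1/2) + (2*(j:ℝ) - 1) / 2^k

/-- The mother Haar function `Haar[1,1]`. -/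
def haar11 (t : ℝ) : ℝ :=
  if 0 < t ∧ t < 1/2 then 1 else if -(1/2) < t ∧ t < 0 then -1 else 0

/-- The Haar functions: `haar 0 1 = 1` and
`haar k j t = 2^((k-1)/2) * haar11 (2^(k-1) (t - P[k,j]))` for `k ≥ 1`. -/
def haar (k j : ℕ) (t : ℝ) : ℝ :=
  if k = 0 then 1
  else (2:ℝ) ^ (((k:ℝ) - 1) / 2) * haar11 ((2:ℝ)^(k-1) * (t - Ppt k j))

/-- The inner product `⟨f,g⟩ = 2^{-N} ∑_{n=1}^{2^N} f[n] g[n]`. -/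
def innerOmega (N : ℕ) (f g : ℕ → ℝ) : ℝ :=
  (1 / 2^N) * ∑ n ∈ Finset.Icc 1 (2^N), f n * g n

/-- The Haar transform `Hf[k,j] = ⟨Haar[k,j], f⟩`. -/
def Htrans (N : ℕ) (f : ℕ → ℝ) (k j : ℕ) : ℝ :=
  innerOmega N (fun n => haar k j (tpt N n)) f

/-- The discrete Fourier transform `Ff[ξ] = 2^{-N} ∑_{n=1}^{2^N} e^{-2πi t[n] ξ} f[n]`. -/
def Ftrans (N : ℕ) (f : ℕ → ℝ) (ξ : ℤ) : ℂ :=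
  (1 / 2^N : ℂ) * ∑ n ∈ Finset.Icc 1 (2^N),
    Complex.exp (-(2 * (Real.pi : ℂ) * Complex.I) * (tpt N n : ℂ) * (ξ : ℂ)) * (f n : ℂ)

section BlockSum

variable {β : Type*} [AddCommMonoid β]

def blockSum (d : ℕ → β) (m q : ℕ) : β :=
  ∑ n ∈ Ioc (q * m) ((q + 1) * m), d n

theorem blockSum_two_mul (d : ℕ → β) (m p : ℕ) :
    blockSum d (2 * m) p = blockSum d m (2 * p) + blockSum d m (2 * p + 1) := by
  rw [blockSum, blockSum, blockSum, show p * (2 * m) = 2 * p * m by ring,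
    show (p + 1) * (2 * m) = (2 * p + 1 + 1) * m by ring]
  exact (sum_Ioc_consecutive d (Nat.mul_le_mul_right m (Nat.le_add_right _ 1))
    (Nat.mul_le_mul_right m (Nat.le_add_right _ 1))).symm

theorem blockSum_one (d : ℕ → β) (q : ℕ) : blockSum d 1 q = d (q + 1) := by
  simp [blockSum, Nat.Ioc_succ_singleton]

end BlockSum

theorem abs_le_half_add_of_abs_add_le_of_abs_sub_le {x y a b : ℝ} (hs : |x + y| ≤ a)
    (hd : |y - x| ≤ b) : |x| ≤ (a + b) / 2 ∧ |y| ≤ (a + b) / 2 := by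
  rw [abs_le] at hs hd
  rw [abs_le, abs_le]
  constructor <;> constructor <;> linarith

theorem abs_blockSum_le (N : ℕ) (d : ℕ → ℝ) (hroot : |blockSum d (2 ^ N) 0| ≤ 1 / 2)
    (hdiff : ∀ k p, k < N → p < 2 ^ k →
      |blockSum d (2 ^ (N - (k + 1))) (2 * p + 1) - blockSum d (2 ^ (N - (k + 1))) (2 * p)| ≤ 1) :
    ∀ k ≤ N, ∀ q < 2 ^ k, |blockSum d (2 ^ (N - k)) q| ≤ 1 - (1 / 2) ^ (k + 1) := by
  intro k
  induction k with
  | zero =>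
    intro _ q hq
    obtain rfl : q = 0 := by omega
    norm_num at hroot ⊢
    exact hroot
  | succ k ih =>
    intro hk q hq
    obtain ⟨p, hp, rfl | rfl⟩ : ∃ p < 2 ^ k, q = 2 * p ∨ q = 2 * p + 1 :=
      ⟨q / 2, by rw [pow_succ] at hq; omega, by omega⟩
    all_goals
      have hwidth : 2 ^ (N - k) = 2 * 2 ^ (N - (k + 1)) := by
        rw [← pow_succ']; congr 1; omega
      have hparent := ih (by omega) p hp
      rw [hwidth, blockSum_two_mul] at hparent
      have hhalves := abs_le_half_add_of_abs_add_le_of_abs_sub_le hparent (hdiff k p hk hp)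
      have hmean : (1 - (1 / 2 : ℝ) ^ (k + 1) + 1) / 2 = 1 - (1 / 2) ^ (k + 1 + 1) := by ring
      rw [hmean] at hhalves
    exacts [hhalves.1, hhalves.2]

theorem lt_odd_div_and_iff_mem_Ioc (a n M : ℕ) (hM : 0 < M) :
    ((a : ℝ) < (2 * n - 1) / (2 * M) ∧ (2 * n - 1 : ℝ) / (2 * M) < a + 1) ↔
      n ∈ Ioc (a * M) ((a + 1) * M) := by
  have h2M : (0 : ℝ) < 2 * M := by positivity
  rw [lt_div_iff₀ h2M, div_lt_iff₀ h2M, mem_Ioc,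
    show (a : ℝ) * (2 * M) = 2 * ((a * M : ℕ) : ℝ) by push_cast; ring,
    show ((a : ℝ) + 1) * (2 * M) = 2 * (((a + 1) * M : ℕ) : ℝ) by push_cast; ring]
  generalize a * M = lo, (a + 1) * M = hi
  have hcast : ∀ u v : ℤ, ((u : ℝ) < v ↔ u < v) := fun u v => Int.cast_lt
  have h1 := hcast (2 * lo) (2 * n - 1)
  have h2 := hcast (2 * n - 1) (2 * hi)
  push_cast at h1 h2
  rw [h1, h2]
  omega

theorem haar11_half_sub (z a : ℝ) :
    haar11 ((z - (2 * a + 1)) / 2) =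
      (if 2 * a + 1 < z ∧ z < 2 * a + 1 + 1 then 1 else 0) -
        (if 2 * a < z ∧ z < 2 * a + 1 then 1 else 0) := by
  have hpos : (0 < (z - (2 * a + 1)) / 2 ∧ (z - (2 * a + 1)) / 2 < 1 / 2) ↔
      (2 * a + 1 < z ∧ z < 2 * a + 1 + 1) := by
    constructor <;> rintro ⟨_, _⟩ <;> constructor <;> linarith
  have hneg : (-(1 / 2) < (z - (2 * a + 1)) / 2 ∧ (z - (2 * a + 1)) / 2 < 0) ↔
      (2 * a < z ∧ z < 2 * a + 1) := by
    constructor <;> rintro ⟨_, _⟩ <;> constructor <;> linarith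
  simp only [haar11, hpos, hneg]
  by_cases hright : 2 * a + 1 < z ∧ z < 2 * a + 1 + 1
  · have hleft : ¬(2 * a < z ∧ z < 2 * a + 1) := fun h => by linarith [h.2, hright.1]
    simp [hright, hleft]
  · simp only [hright, if_false, zero_sub]
    split_ifs <;> norm_num

-- `(2n - 1) / (2 · 2^(N-k))` locates `t[n]` in units of half-blocks of level `k`: the
-- half-block `q` is the open interval `(q, q + 1)`.
theorem two_pow_mul_tpt_sub_Ppt {N k : ℕ} (hk : 1 ≤ k) (hkN : k ≤ N) (n p : ℕ) :
    (2 : ℝ) ^ (k - 1) * (tpt N n - Ppt k (p + 1)) =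
      ((2 * n - 1) / (2 * 2 ^ (N - k)) - (2 * p + 1)) / 2 := by
  have hk' : (2 : ℝ) ^ k = 2 * 2 ^ (k - 1) := by rw [← pow_succ']; congr 1; omega
  have hN : (2 : ℝ) ^ (N + 1) = 2 ^ k * (2 * 2 ^ (N - k)) := by
    rw [← pow_succ', ← pow_add]; congr 1; omega
  rw [tpt, Ppt, hN, hk']
  push_cast
  field_simp
  ring

theorem haar_tpt {N k : ℕ} (hk : 1 ≤ k) (hkN : k ≤ N) (n p : ℕ) :
    haar k (p + 1) (tpt N n) = (2 : ℝ) ^ (((k : ℝ) - 1) / 2) *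
      ((if n ∈ Ioc ((2 * p + 1) * 2 ^ (N - k)) ((2 * p + 1 + 1) * 2 ^ (N - k)) then 1 else 0) -
        (if n ∈ Ioc (2 * p * 2 ^ (N - k)) ((2 * p + 1) * 2 ^ (N - k)) then 1 else 0)) := by
  have hright := lt_odd_div_and_iff_mem_Ioc (2 * p + 1) n (2 ^ (N - k)) (by positivity)
  have hleft := lt_odd_div_and_iff_mem_Ioc (2 * p) n (2 ^ (N - k)) (by positivity)
  push_cast at hright hleft
  rw [haar, if_neg (by omega), two_pow_mul_tpt_sub_Ppt hk hkN, haar11_half_sub]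
  simp only [hright, hleft]

theorem Htrans_sub (N : ℕ) (f g : ℕ → ℝ) (k j : ℕ) :
    Htrans N (f - g) k j = Htrans N f k j - Htrans N g k j := by
  simp only [Htrans, innerOmega, Pi.sub_apply, mul_sub, sum_sub_distrib]

theorem Icc_one_eq_Ioc_zero (m : ℕ) : Icc 1 m = Ioc 0 m :=
  Finset.Icc_add_one_left_eq_Ioc 0 m

theorem Htrans_zero_one (N : ℕ) (d : ℕ → ℝ) :
    Htrans N d 0 1 = (2 : ℝ) ^ (-(N : ℝ)) * blockSum d (2 ^ N) 0 := by
  simp [Htrans, innerOmega, haar, blockSum, Icc_one_eq_Ioc_zero, Real.rpow_neg, Real.rpow_natCast]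

theorem Htrans_succ {N k p : ℕ} (hk : 1 ≤ k) (hkN : k ≤ N) (hp : p < 2 ^ (k - 1)) (d : ℕ → ℝ) :
    Htrans N d k (p + 1) = (2 : ℝ) ^ (-(N : ℝ) + ((k : ℝ) - 1) / 2) *
      (blockSum d (2 ^ (N - k)) (2 * p + 1) - blockSum d (2 ^ (N - k)) (2 * p)) := by
  have hend : (2 * p + 1 + 1) * 2 ^ (N - k) ≤ 2 ^ N :=
    calc (2 * p + 1 + 1) * 2 ^ (N - k) ≤ 2 ^ k * 2 ^ (N - k) := by
          refine Nat.mul_le_mul_right _ ?_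
          rw [show k = k - 1 + 1 by omega, pow_succ]
          omega
      _ = 2 ^ N := by rw [← pow_add]; congr 1; omega
  have hright : Ioc ((2 * p + 1) * 2 ^ (N - k)) ((2 * p + 1 + 1) * 2 ^ (N - k)) ⊆ Ioc 0 (2 ^ N) :=
    Ioc_subset_Ioc (Nat.zero_le _) hend
  have hleft : Ioc (2 * p * 2 ^ (N - k)) ((2 * p + 1) * 2 ^ (N - k)) ⊆ Ioc 0 (2 ^ N) :=
    Ioc_subset_Ioc (Nat.zero_le _) (le_trans (Nat.mul_le_mul_right _ (by omega)) hend)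
  simp only [Htrans, innerOmega, Icc_one_eq_Ioc_zero, haar_tpt hk hkN,
    mul_assoc ((2 : ℝ) ^ (((k : ℝ) - 1) / 2)), ← mul_sum,
    sub_mul, sum_sub_distrib, ite_mul, one_mul, zero_mul, sum_ite_mem, inter_eq_right.mpr hright,
    inter_eq_right.mpr hleft, blockSum]
  rw [Real.rpow_add two_pos, Real.rpow_neg zero_le_two, Real.rpow_natCast, one_div]
  ring

theorem abs_le_of_abs_mul_le_mul {c x a : ℝ} (hc : 0 < c) (h : |c * x| ≤ c * a) : |x| ≤ a := by
  rwa [abs_mul, abs_of_pos hc, mul_le_mul_iff_right₀ hc] at h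

theorem two_rpow_neg_sub_one (N : ℕ) : (2 : ℝ) ^ (-(N : ℝ) - 1) = (1 / 2) ^ (N + 1) := by
  rw [show -(N : ℝ) - 1 = -((N + 1 : ℕ) : ℝ) by push_cast; ring, Real.rpow_neg zero_le_two,
    Real.rpow_natCast, one_div_pow, one_div]

theorem sum_Icc_one_two_pow (N : ℕ) : ∑ k ∈ Icc 1 N, (2 : ℝ) ^ k = 2 ^ (N + 1) - 2 := by
  induction N with
  | zero => simp
  | succ N ih =>
    rw [sum_Icc_succ_top (by omega), ih]
    ring

theorem two_rpow_neg_sub_one_add_sum (N : ℕ) :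
    (2 : ℝ) ^ (-(N : ℝ) - 1) + ∑ k ∈ Icc 1 N, (2 : ℝ) ^ (-(N : ℝ) + k - 1) =
      1 - (2 : ℝ) ^ (-(N : ℝ) - 1) := by
  have hterm : ∀ k : ℕ, (2 : ℝ) ^ (-(N : ℝ) + k - 1) = 2 ^ (-(N : ℝ) - 1) * 2 ^ k := fun k => by
    rw [show -(N : ℝ) + k - 1 = (-(N : ℝ) - 1) + k by ring, Real.rpow_add two_pos,
      Real.rpow_natCast]
  have hinv : (1 / 2 : ℝ) ^ (N + 1) * 2 ^ (N + 1) = 1 := by rw [← mul_pow]; norm_num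
  simp only [hterm, ← mul_sum, sum_Icc_one_two_pow, two_rpow_neg_sub_one]
  linear_combination hinv

/-- **Uniform error bound from Haar coefficient bounds.** If
`|Hf[0,1] − Hg[0,1]| ≤ 2^{−N−1}` and `|Hf[k,j] − Hg[k,j]| ≤ 2^{−N+(k−1)/2}` for all
`(k,j) ∈ Ω̂` with `k ≥ 1`, then
`sup_{t∈Ω} |f(t) − g(t)| ≤ 2^{−N−1} + ∑_{k=1}^N 2^{−N+k−1} = 1 − 2^{−N−1}`. -/
theorem uniform_error_bound (N : ℕ) (f g : ℕ → ℝ)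
    (h0 : |Htrans N f 0 1 - Htrans N g 0 1| ≤ (2:ℝ) ^ (-(N:ℝ) - 1))
    (h : ∀ k j : ℕ, 1 ≤ k → k ≤ N → 1 ≤ j → j ≤ 2^(k-1) →
      |Htrans N f k j - Htrans N g k j| ≤ (2:ℝ) ^ (-(N:ℝ) + ((k:ℝ) - 1)/2)) :
    (∀ n ∈ Finset.Icc 1 (2^N),
      |f n - g n| ≤ (2:ℝ) ^ (-(N:ℝ) - 1) + ∑ k ∈ Finset.Icc 1 N, (2:ℝ) ^ (-(N:ℝ) + (k:ℝ) - 1)) ∧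
    (2:ℝ) ^ (-(N:ℝ) - 1) + (∑ k ∈ Finset.Icc 1 N, (2:ℝ) ^ (-(N:ℝ) + (k:ℝ) - 1)) =
      1 - (2:ℝ) ^ (-(N:ℝ) - 1) := by
  have hvalue := two_rpow_neg_sub_one_add_sum N
  refine ⟨fun n hn => ?_, hvalue⟩
  have hroot : |blockSum (f - g) (2 ^ N) 0| ≤ 1 / 2 := by
    rw [← Htrans_sub, Htrans_zero_one, Real.rpow_sub_one two_ne_zero, div_eq_mul_one_div] at h0
    exact abs_le_of_abs_mul_le_mul (by positivity) h0
  have hdiff : ∀ k p, k < N → p < 2 ^ k →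
      |blockSum (f - g) (2 ^ (N - (k + 1))) (2 * p + 1) -
        blockSum (f - g) (2 ^ (N - (k + 1))) (2 * p)| ≤ 1 := by
    intro k p hk hp
    have hkp := h (k + 1) (p + 1) (by omega) hk (by omega) (by simpa using hp)
    rw [← Htrans_sub, Htrans_succ (k := k + 1) (by omega) hk (by simpa using hp)] at hkp
    exact abs_le_of_abs_mul_le_mul (by positivity) (hkp.trans_eq (mul_one _).symm)
  have hpoint := abs_blockSum_le N _ hroot hdiff N le_rfl (n - 1) (by simp at hn; omega)
  rw [Nat.sub_self, pow_zero, blockSum_one, Nat.sub_add_cancel (mem_Icc.1 hn).1] at hpoint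
  rwa [hvalue, two_rpow_neg_sub_one]
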